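/- arXiv:2303.01841 — 2 statements merged into one kernel-verified Lean document; each statement's English description precedes it below -/
import Mathlib

section
/- In the piecewise setting on [−1,1], for every integer n ≥ 1 the Legendre coefficient decomposes as c_n = A_n + B_n, where A_n = −(1/(2√(2n+1)))·Σ_{i=1}^{K+1} ∫_{b_{i−1}}^{b_i} g_i'(y)·(P_{n+1}(y) − P_{n−1}(y)) dy and B_n = (1/(2√(2n+1)))·Σ_{i=1}^{K} (g_i(b_i) − g_{i+1}(b_i))·(P_{n+1}(b_i) − P_{n−1}(b_i)). -/
open MeasureTheory Set

noncomputable def legendreP (n : ℕ) (y : ℝ) : ℝ :=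
  (1 / ((2 : ℝ) ^ n * (n.factorial : ℝ))) *
    iteratedDeriv n (fun x : ℝ => (x ^ 2 - 1) ^ n) y

noncomputable def hzeta (s a : ℝ) : ℝ := ∑' k : ℕ, ((k : ℝ) + a) ^ (-s)

noncomputable def legCoeff (g : ℝ → ℝ) (n : ℕ) : ℝ :=
  (Real.sqrt (2 * (n : ℝ) + 1) / 2) * ∫ y in (-1 : ℝ)..1, g y * legendreP n y

noncomputable def Aterm (K : ℕ) (b : ℕ → ℝ) (G : ℕ → ℝ → ℝ) (n : ℕ) : ℝ :=
  -(1 / (2 * Real.sqrt (2 * (n : ℝ) + 1))) *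
    ∑ i ∈ Finset.range (K + 1),
      ∫ y in (b i)..(b (i + 1)),
        derivWithin (G i) (Set.Icc (b i) (b (i + 1))) y *
          (legendreP (n + 1) y - legendreP (n - 1) y)

noncomputable def Bterm (K : ℕ) (b : ℕ → ℝ) (G : ℕ → ℝ → ℝ) (n : ℕ) : ℝ :=
  (1 / (2 * Real.sqrt (2 * (n : ℝ) + 1))) *
    ∑ i ∈ Finset.Icc 1 K,
      (G (i - 1) (b i) - G i (b i)) *
        (legendreP (n + 1) (b i) - legendreP (n - 1) (b i))

noncomputable def jumpSum (K : ℕ) (b : ℕ → ℝ) (G : ℕ → ℝ → ℝ) : ℝ :=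
  ∑ i ∈ Finset.Icc 1 K, |G i (b i) - G (i - 1) (b i)|

/-! On each piece, integrate `G i · P_n` by parts against `P_{n+1} - P_{n-1}`, which is an
antiderivative of `(2n+1) P_n`: by Rodrigues' formula this reduces to
`D²(x²-1)^{n+1} = 2(n+1)((2n+1)(x²-1)^n + 2n(x²-1)^{n-1})`. Since `P_k(1) = 1` and
`P_k(-1) = (-1)^k`, the antiderivative vanishes at `±1`, so summing over the pieces the
boundary terms telescope into the jumps of `g` at the break points. -/

namespace Polynomial

theorem eval_iterate_derivative_X_sub_C_pow_mul {R : Type*} [CommRing R] (n : ℕ) (t : R)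
    (q : R[X]) :
    (derivative^[n] ((X - C t) ^ n * q)).eval t = n.factorial * q.eval t := by
  rw [iterate_derivative_mul, eval_finsetSum,
    Finset.sum_eq_single_of_mem _ (Finset.mem_range.mpr n.succ_pos)]
  · rw [n.choose_zero_right, one_smul, eval_mul, n.sub_zero, iterate_derivative_X_sub_pow_self,
      eval_natCast, Function.iterate_zero_apply]
  · intro k hk hk0
    rw [iterate_derivative_X_sub_pow, eval_smul, eval_mul, eval_smul, eval_pow,
      Nat.sub_sub_self (Finset.mem_range_succ_iff.mp hk), eval_sub, eval_X, eval_C, sub_self,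
      zero_pow hk0, smul_zero, zero_mul, smul_zero]

theorem iteratedDeriv_eval {𝕜 : Type*} [NontriviallyNormedField 𝕜] (k : ℕ) (p : 𝕜[X]) :
    iteratedDeriv k (fun x => p.eval x) = fun x => (derivative^[k] p).eval x := by
  induction k generalizing p with
  | zero => simp
  | succ k ih =>
    have hd : deriv (fun x => p.eval x) = fun x => (derivative p).eval x := by
      ext x; exact (p.hasDerivAt x).deriv
    rw [iteratedDeriv_succ', hd, ih, Function.iterate_succ_apply]

end Polynomial

theorem integral_mul_deriv_eq_derivWithin_mul_of_contDiffOn {a c : ℝ} (hac : a < c)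
    {F Q q : ℝ → ℝ} (hF : ContDiffOn ℝ 1 F (Icc a c))
    (hQ : ∀ x ∈ Icc a c, HasDerivAt Q (q x) x) (hq : IntervalIntegrable q volume a c) :
    ∫ x in a..c, F x * q x =
      F c * Q c - F a * Q a - ∫ x in a..c, derivWithin F (Icc a c) x * Q x := by
  have hF' : ContinuousOn (derivWithin F (Icc a c)) (Icc a c) :=
    hF.continuousOn_derivWithin (uniqueDiffOn_Icc hac) le_rfl
  have hI : uIcc a c = Icc a c := uIcc_of_le hac.le
  refine intervalIntegral.integral_mul_deriv_eq_deriv_mul_of_hasDerivWithinAt (fun x hx => ?_)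
    (fun x hx => (hQ x (hI ▸ hx)).hasDerivWithinAt) (hF'.intervalIntegrable_of_Icc hac.le) hq
  rw [hI] at hx ⊢
  exact (hF.differentiableOn one_ne_zero x hx).hasDerivWithinAt

theorem integral_eq_sum_of_eqOn_uIoo {E : Type*} [NormedAddCommGroup E] [NormedSpace ℝ E]
    {φ : ℝ → E} {ψ : ℕ → ℝ → E} {b : ℕ → ℝ} {N : ℕ}
    (hψ : ∀ i < N, IntervalIntegrable (ψ i) volume (b i) (b (i + 1)))
    (hφψ : ∀ i < N, EqOn φ (ψ i) (uIoo (b i) (b (i + 1)))) :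
    ∫ x in b 0..b N, φ x = ∑ i ∈ Finset.range N, ∫ x in b i..b (i + 1), ψ i x := by
  rw [← intervalIntegral.sum_integral_adjacent_intervals
    fun i hi => (hψ i hi).congr_uIoo fun x hx => (hφψ i hi hx).symm]
  exact Finset.sum_congr rfl fun i hi =>
    intervalIntegral.integral_congr_uIoo (hφψ i (Finset.mem_range.mp hi))

theorem Finset.sum_range_sub_eq_sum_Icc_sub {M : Type*} [AddCommGroup M] (u : ℕ → ℕ → M)
    (K : ℕ) (h0 : u 0 0 = 0) (hK : u K (K + 1) = 0) :
    ∑ i ∈ range (K + 1), (u i (i + 1) - u i i) = ∑ i ∈ Icc 1 K, (u (i - 1) i - u i i) := by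
  rw [sum_sub_distrib, sum_sub_distrib, sum_range_succ, hK, add_zero, sum_range_succ', h0,
    add_zero, ← Ico_add_one_right_eq_Icc, sum_Ico_eq_sum_range, sum_Ico_eq_sum_range,
    Nat.add_sub_cancel]
  simp only [add_comm 1, Nat.add_sub_cancel]

open Polynomial

noncomputable def rodriguesPoly (n : ℕ) : ℝ[X] := derivative^[n] ((X ^ 2 - 1) ^ n)

theorem legendreP_eq_eval (n : ℕ) (y : ℝ) :
    legendreP n y = (rodriguesPoly n).eval y / (2 ^ n * n.factorial) := by
  have h : (fun x : ℝ => (x ^ 2 - 1) ^ n) = fun x => ((X ^ 2 - 1) ^ n : ℝ[X]).eval x := by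
    simp
  rw [legendreP, h, iteratedDeriv_eval, rodriguesPoly, one_div_mul_eq_div]

theorem derivative_X_sq_sub_one_pow_succ (n : ℕ) :
    derivative (((X : ℝ[X]) ^ 2 - 1) ^ (n + 1)) =
      C (2 * ((n : ℝ) + 1)) * (X * (X ^ 2 - 1) ^ n) := by
  rw [derivative_pow, derivative_sub, derivative_X_pow, derivative_one]
  simp only [map_mul, map_add, map_natCast, map_ofNat, map_one, Nat.add_sub_cancel]
  push_cast
  ring

theorem derivative_rodriguesPoly_succ_succ (m : ℕ) :
    derivative (rodriguesPoly (m + 2)) =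
      C (2 * ((m : ℝ) + 2)) * (C (2 * (m : ℝ) + 3) * rodriguesPoly (m + 1) +
        C (2 * ((m : ℝ) + 1)) * derivative (rodriguesPoly m)) := by
  -- `X² (X² - 1)^m = (X² - 1)^(m+1) + (X² - 1)^m` collapses the second derivative
  have h2 : derivative^[2] (((X : ℝ[X]) ^ 2 - 1) ^ (m + 2)) =
      C (2 * ((m : ℝ) + 2)) * (C (2 * (m : ℝ) + 3) * (X ^ 2 - 1) ^ (m + 1) +
        C (2 * ((m : ℝ) + 1)) * (X ^ 2 - 1) ^ m) := by
    rw [Function.iterate_succ_apply, Function.iterate_one, derivative_X_sq_sub_one_pow_succ,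
      derivative_C_mul, derivative_mul, derivative_X, derivative_X_sq_sub_one_pow_succ]
    simp only [map_mul, map_add, map_natCast, map_ofNat, map_one]
    push_cast
    linear_combination (-(2 * ((m : ℝ[X]) + 2)) * (2 * ((m : ℝ[X]) + 1))) *
      (pow_succ ((X : ℝ[X]) ^ 2 - 1) m)
  have hshift : derivative (derivative^[m + 2] (((X : ℝ[X]) ^ 2 - 1) ^ (m + 2))) =
      derivative^[m + 1] (derivative^[2] ((X ^ 2 - 1) ^ (m + 2))) := by
    rw [← Function.iterate_succ_apply' derivative, ← Function.iterate_add_apply]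
  rw [rodriguesPoly, rodriguesPoly, rodriguesPoly, hshift, h2, iterate_derivative_C_mul,
    iterate_map_add, iterate_derivative_C_mul, iterate_derivative_C_mul,
    ← Function.iterate_succ_apply' derivative]

theorem hasDerivAt_legendreP (n : ℕ) (y : ℝ) :
    HasDerivAt (legendreP n)
      ((derivative (rodriguesPoly n)).eval y / (2 ^ n * n.factorial)) y := by
  rw [show legendreP n = fun y => (rodriguesPoly n).eval y / (2 ^ n * n.factorial) from
    funext (legendreP_eq_eval n)]
  exact ((rodriguesPoly n).hasDerivAt y).div_const _

theorem continuous_legendreP (n : ℕ) : Continuous (legendreP n) :=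
  continuous_iff_continuousAt.2 fun y => (hasDerivAt_legendreP n y).continuousAt

theorem hasDerivAt_legendreP_succ_sub_legendreP_pred {n : ℕ} (hn : 1 ≤ n) (y : ℝ) :
    HasDerivAt (fun y => legendreP (n + 1) y - legendreP (n - 1) y)
      ((2 * n + 1) * legendreP n y) y := by
  obtain ⟨m, rfl⟩ := Nat.exists_eq_add_of_le' hn
  refine ((hasDerivAt_legendreP (m + 2) y).fun_sub (hasDerivAt_legendreP m y)).congr_deriv ?_
  rw [derivative_rodriguesPoly_succ_succ, legendreP_eq_eval]
  simp only [eval_mul, eval_add, eval_C, Nat.factorial_succ]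
  push_cast
  field_simp
  ring

theorem legendreP_one (n : ℕ) : legendreP n 1 = 1 := by
  have h : ((X : ℝ[X]) ^ 2 - 1) ^ n = (X - C 1) ^ n * (X + 1) ^ n := by
    rw [← mul_pow]; simp only [map_one]; ring
  rw [legendreP_eq_eval, rodriguesPoly, h, eval_iterate_derivative_X_sub_C_pow_mul]
  simp only [eval_pow, eval_add, eval_X, eval_one]
  field_simp
  norm_num

theorem legendreP_neg_one (n : ℕ) : legendreP n (-1) = (-1) ^ n := by
  have h : ((X : ℝ[X]) ^ 2 - 1) ^ n = (X - C (-1)) ^ n * (X - 1) ^ n := by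
    rw [← mul_pow]; simp only [map_neg, map_one]; ring
  rw [legendreP_eq_eval, rodriguesPoly, h, eval_iterate_derivative_X_sub_C_pow_mul]
  simp only [eval_pow, eval_sub, eval_X, eval_one]
  field_simp
  norm_num [← mul_pow]

theorem legendreP_succ_sub_legendreP_pred_one (n : ℕ) :
    legendreP (n + 1) 1 - legendreP (n - 1) 1 = 0 := by
  rw [legendreP_one, legendreP_one, sub_self]

theorem legendreP_succ_sub_legendreP_pred_neg_one {n : ℕ} (hn : 1 ≤ n) :
    legendreP (n + 1) (-1) - legendreP (n - 1) (-1) = 0 := by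
  obtain ⟨m, rfl⟩ := Nat.exists_eq_add_of_le' hn
  rw [legendreP_neg_one, legendreP_neg_one, Nat.add_sub_cancel]
  ring

theorem integral_mul_legendreP_eq {n : ℕ} (hn : 1 ≤ n) {a c : ℝ} (hac : a < c)
    {F : ℝ → ℝ} (hF : ContDiffOn ℝ 1 F (Icc a c)) :
    (2 * n + 1) * ∫ y in a..c, F y * legendreP n y =
      F c * (legendreP (n + 1) c - legendreP (n - 1) c) -
        F a * (legendreP (n + 1) a - legendreP (n - 1) a) -
        ∫ y in a..c,
          derivWithin F (Icc a c) y * (legendreP (n + 1) y - legendreP (n - 1) y) := by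
  rw [← intervalIntegral.integral_const_mul]
  simp_rw [mul_left_comm _ (F _)]
  exact integral_mul_deriv_eq_derivWithin_mul_of_contDiffOn hac hF
    (fun y _ => hasDerivAt_legendreP_succ_sub_legendreP_pred hn y)
    ((continuous_const.mul (continuous_legendreP n)).intervalIntegrable _ _)

theorem integral_mul_eq_sum_of_piecewise {K : ℕ} {b : ℕ → ℝ} {G : ℕ → ℝ → ℝ}
    {g f : ℝ → ℝ} (hbmono : ∀ i ≤ K, b i < b (i + 1))
    (hG : ∀ i ≤ K, ContinuousOn (G i) (Icc (b i) (b (i + 1))))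
    (hg1 : ∀ i < K, ∀ y, b i ≤ y → y < b (i + 1) → g y = G i y)
    (hg2 : ∀ y ∈ Icc (b K) (b (K + 1)), g y = G K y) (hf : Continuous f) :
    ∫ y in b 0..b (K + 1), g y * f y =
      ∑ i ∈ Finset.range (K + 1), ∫ y in b i..b (i + 1), G i y * f y := by
  refine integral_eq_sum_of_eqOn_uIoo (fun i hi =>
    ((hG i (by omega)).mul hf.continuousOn).intervalIntegrable_of_Icc (hbmono i (by omega)).le)
    fun i hi y hy => ?_
  rw [uIoo_of_le (hbmono i (by omega)).le] at hy
  rcases (Nat.lt_succ_iff.mp hi).lt_or_eq with hi | rfl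
  · simp only [hg1 i hi y hy.1.le hy.2]
  · simp only [hg2 y (Ioo_subset_Icc_self hy)]

theorem legCoeff_eq_Aterm_add_Bterm_general
    (K : ℕ) (b : ℕ → ℝ) (G : ℕ → ℝ → ℝ) (g : ℝ → ℝ)
    (hb0 : b 0 = -1) (hbK : b (K + 1) = 1)
    (hbmono : ∀ i ≤ K, b i < b (i + 1))
    (hG : ∀ i ≤ K, ContDiffOn ℝ 1 (G i) (Set.Icc (b i) (b (i + 1))))
    (hg1 : ∀ i < K, ∀ y, b i ≤ y → y < b (i + 1) → g y = G i y)
    (hg2 : ∀ y ∈ Set.Icc (b K) (b (K + 1)), g y = G K y)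
    (n : ℕ) (hn : 1 ≤ n) :
    legCoeff g n = Aterm K b G n + Bterm K b G n := by
  set Q : ℝ → ℝ := fun y => legendreP (n + 1) y - legendreP (n - 1) y
  have hsplit := integral_mul_eq_sum_of_piecewise hbmono (fun i hi => (hG i hi).continuousOn)
    hg1 hg2 (continuous_legendreP n)
  rw [hb0, hbK] at hsplit
  have htel := Finset.sum_range_sub_eq_sum_Icc_sub (fun i j => G i (b j) * Q (b j)) K
    (by simp only [Q, hb0, legendreP_succ_sub_legendreP_pred_neg_one hn, mul_zero])
    (by simp only [Q, hbK, legendreP_succ_sub_legendreP_pred_one, mul_zero])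
  simp only [← sub_mul] at htel
  have hscaled : (2 * n + 1) * ∫ y in (-1 : ℝ)..1, g y * legendreP n y =
      ∑ i ∈ Finset.Icc 1 K, (G (i - 1) (b i) - G i (b i)) * Q (b i) -
      ∑ i ∈ Finset.range (K + 1), ∫ y in (b i)..(b (i + 1)),
        derivWithin (G i) (Set.Icc (b i) (b (i + 1))) y * Q y := by
    rw [hsplit, Finset.mul_sum, ← htel, ← Finset.sum_sub_distrib]
    refine Finset.sum_congr rfl fun i hi => ?_
    have hiK : i ≤ K := Nat.lt_succ_iff.mp (Finset.mem_range.mp hi)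
    exact integral_mul_legendreP_eq hn (hbmono i hiK) (hG i hiK)
  have hs : Real.sqrt (2 * n + 1) ^ 2 = 2 * n + 1 := Real.sq_sqrt (by positivity)
  have hs0 : 0 < Real.sqrt (2 * n + 1) := Real.sqrt_pos.2 (by positivity)
  rw [legCoeff, Aterm, Bterm]
  field_simp
  linear_combination hscaled + (∫ y in (-1 : ℝ)..1, g y * legendreP n y) * hs

/-- in the piecewise setting on [-1,1], for every n ≥ 1 the Legendre
coefficient decomposes as c_n = A_n + B_n. -/
theorem legCoeff_eq_Aterm_add_Bterm
    (K : ℕ) (b : ℕ → ℝ) (L : ℝ) (G : ℕ → ℝ → ℝ) (g : ℝ → ℝ)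
    (hb0 : b 0 = -1) (hbK : b (K + 1) = 1)
    (hbmono : ∀ i ≤ K, b i < b (i + 1))
    (hL : 0 ≤ L)
    (hG : ∀ i ≤ K, ContDiffOn ℝ 1 (G i) (Set.Icc (b i) (b (i + 1))))
    (hGder : ∀ i ≤ K, ∀ y ∈ Set.Icc (b i) (b (i + 1)),
      |derivWithin (G i) (Set.Icc (b i) (b (i + 1))) y| ≤ L)
    (hg1 : ∀ i < K, ∀ y, b i ≤ y → y < b (i + 1) → g y = G i y)
    (hg2 : ∀ y ∈ Set.Icc (b K) (b (K + 1)), g y = G K y)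
    (n : ℕ) (hn : 1 ≤ n) :
    legCoeff g n = Aterm K b G n + Bterm K b G n :=
  legCoeff_eq_Aterm_add_Bterm_general K b G g hb0 hbK hbmono hG hg1 hg2 n hn
end

section
/- In the piecewise setting on [−1,1], for every integer n ≥ 1 the integral term A_n = −(1/(2√(2n+1)))·Σ_{i=1}^{K+1} ∫_{b_{i−1}}^{b_i} g_i'(y)·(P_{n+1}(y) − P_{n−1}(y)) dy satisfies |A_n| ≤ (L·(K+1)/√(2n+1))·√(1/(2n+3) + 1/(2n−1)). -/
open MeasureTheory Set

/-! Put `h = P_{n+1} - P_{n-1}`. Bounding `|g_i'|` by `L` on each piece and gluing the adjacent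
pieces gives `|A_n| ≤ L ∫_{-1}^1 |h| / (2√(2n+1))`. Cauchy–Schwarz gives `∫ |h| ≤ √(2 ∫ h²)`, and
repeated integration by parts in Rodrigues' formula gives orthogonality of the Legendre polynomials
and `∫ P_k² = 2/(2k+1)`, so that `∫ h² = 2/(2n+3) + 2/(2n-1)`. -/

open Polynomial intervalIntegral

theorem Polynomial.iteratedDeriv_eval_s4 {𝕜 : Type*} [NontriviallyNormedField 𝕜] (p : 𝕜[X])
    (n : ℕ) : iteratedDeriv n (fun x => p.eval x) = fun x => (derivative^[n] p).eval x := by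
  induction n with
  | zero => rfl
  | succ n ih =>
    ext x
    rw [iteratedDeriv_succ, ih, Function.iterate_succ_apply', Polynomial.deriv]

noncomputable def legendrePoly (n : ℕ) : ℝ[X] :=
  C (1 / (2 ^ n * n.factorial : ℝ)) * derivative^[n] ((X ^ 2 - 1) ^ n)

theorem legendreP_eq_eval_s4 (n : ℕ) (y : ℝ) : legendreP n y = (legendrePoly n).eval y := by
  have hpow : (fun x : ℝ => (x ^ 2 - 1) ^ n) = fun x => ((X ^ 2 - 1 : ℝ[X]) ^ n).eval x := by
    simp
  rw [legendreP, hpow, iteratedDeriv_eval_s4, legendrePoly, eval_mul, eval_C]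

theorem monic_sq_sub_one : (X ^ 2 - 1 : ℝ[X]).Monic := by
  simpa using monic_X_pow_sub_C (1 : ℝ) two_ne_zero

theorem natDegree_sq_sub_one_pow (n : ℕ) : ((X ^ 2 - 1 : ℝ[X]) ^ n).natDegree = 2 * n := by
  rw [monic_sq_sub_one.natDegree_pow, mul_comm, show (X ^ 2 - 1 : ℝ[X]).natDegree = 2 by
    compute_degree!]

theorem natDegree_legendrePoly_le (n : ℕ) : (legendrePoly n).natDegree ≤ n := by
  refine (natDegree_C_mul_le _ _).trans ((natDegree_iterate_derivative _ n).trans ?_)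
  rw [natDegree_sq_sub_one_pow]
  omega

theorem Polynomial.iterate_derivative_natDegree {R : Type*} [Semiring R] (p : R[X]) :
    derivative^[p.natDegree] p = C (p.natDegree.factorial • p.leadingCoeff) := by
  refine (eq_C_of_natDegree_le_zero ?_).trans ?_
  · have := natDegree_iterate_derivative p p.natDegree
    omega
  · rw [coeff_iterate_derivative, zero_add, Nat.descFactorial_self, leadingCoeff]

theorem eval_iterate_derivative_sq_sub_one_pow_eq_zero {R : Type*} [CommRing R] {m n : ℕ}
    (hmn : m < n) {y : R} (hy : y ^ 2 = 1) :
    (derivative^[m] ((X ^ 2 - 1 : R[X]) ^ n)).eval y = 0 := by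
  obtain ⟨q, hq⟩ := (pow_dvd_pow (X ^ 2 - 1 : R[X]) (Nat.sub_pos_of_lt hmn)).trans
    (pow_sub_dvd_iterate_derivative_pow (X ^ 2 - 1 : R[X]) n m)
  simp [hq, hy]

theorem integral_eval_iterate_derivative_mul {a b : ℝ} (k : ℕ) (p q : ℝ[X])
    (ha : ∀ j < k, (derivative^[j] p).eval a = 0) (hb : ∀ j < k, (derivative^[j] p).eval b = 0) :
    ∫ y in a..b, (derivative^[k] p).eval y * q.eval y =
      (-1) ^ k * ∫ y in a..b, p.eval y * (derivative^[k] q).eval y := by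
  induction k generalizing p with
  | zero => simp
  | succ k ih =>
    rw [Function.iterate_succ_apply, ih (derivative p) (fun j hj => ha (j + 1) (by omega))
      (fun j hj => hb (j + 1) (by omega)), Function.iterate_succ_apply']
    have hparts := intervalIntegral.integral_mul_deriv_eq_deriv_mul (a := a) (b := b)
      (fun y _ => p.hasDerivAt y) (fun y _ => (derivative^[k] q).hasDerivAt y)
      ((derivative p).continuous.intervalIntegrable _ _)
      ((derivative (derivative^[k] q)).continuous.intervalIntegrable _ _)
    rw [show p.eval a = 0 from ha 0 k.succ_pos, show p.eval b = 0 from hb 0 k.succ_pos] at hparts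
    rw [pow_succ, hparts]
    ring

theorem integral_legendrePoly_mul_eq_zero {n : ℕ} {q : ℝ[X]} (hq : q.natDegree < n) :
    ∫ y in (-1 : ℝ)..1, (legendrePoly n).eval y * q.eval y = 0 := by
  simp only [legendrePoly, eval_mul, eval_C, mul_assoc]
  rw [intervalIntegral.integral_const_mul, integral_eval_iterate_derivative_mul n _ q
    (fun j hj => eval_iterate_derivative_sq_sub_one_pow_eq_zero hj (by norm_num))
    (fun j hj => eval_iterate_derivative_sq_sub_one_pow_eq_zero hj (by norm_num)),
    iterate_derivative_eq_zero hq]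
  simp

theorem integral_one_sub_sq_pow_succ (m : ℕ) :
    (2 * m + 3 : ℝ) * ∫ y in (-1 : ℝ)..1, (1 - y ^ 2) ^ (m + 1) =
      (2 * m + 2) * ∫ y in (-1 : ℝ)..1, (1 - y ^ 2) ^ m := by
  have hderiv : ∀ y : ℝ, HasDerivAt (fun y => y * (1 - y ^ 2) ^ (m + 1))
      ((2 * m + 3) * (1 - y ^ 2) ^ (m + 1) - (2 * m + 2) * (1 - y ^ 2) ^ m) y := by
    intro y
    refine ((hasDerivAt_id y).mul (((hasDerivAt_pow 2 y).const_sub 1).pow (m + 1))).congr_deriv ?_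
    simp only [id, Pi.pow_apply, Nat.add_sub_cancel]
    push_cast
    ring
  have hftc := integral_eq_sub_of_hasDerivAt (fun y _ => hderiv y)
    (Continuous.intervalIntegrable (by fun_prop) (-1) 1)
  rw [integral_sub (Continuous.intervalIntegrable (by fun_prop) _ _)
    (Continuous.intervalIntegrable (by fun_prop) _ _), intervalIntegral.integral_const_mul,
    intervalIntegral.integral_const_mul] at hftc
  norm_num at hftc
  linarith

theorem integral_one_sub_sq_pow (m : ℕ) :
    ∫ y in (-1 : ℝ)..1, (1 - y ^ 2) ^ m =
      2 ^ (2 * m + 1) * (m.factorial : ℝ) ^ 2 / (2 * m + 1).factorial := by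
  induction m with
  | zero => norm_num
  | succ m ih =>
    have hrec : ∫ y in (-1 : ℝ)..1, (1 - y ^ 2) ^ (m + 1) =
        (2 * m + 2 : ℝ) / (2 * m + 3) * ∫ y in (-1 : ℝ)..1, (1 - y ^ 2) ^ m := by
      rw [div_mul_eq_mul_div, ← integral_one_sub_sq_pow_succ, mul_div_cancel_left₀ _ (by positivity)]
    rw [hrec, ih, show 2 * (m + 1) + 1 = 2 * m + 1 + 1 + 1 by ring, Nat.factorial_succ m,
      Nat.factorial_succ (2 * m + 1 + 1), Nat.factorial_succ (2 * m + 1)]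
    push_cast
    field_simp
    ring

theorem integral_legendrePoly_sq (n : ℕ) :
    ∫ y in (-1 : ℝ)..1, (legendrePoly n).eval y ^ 2 = 2 / (2 * n + 1) := by
  set u : ℝ[X] := (X ^ 2 - 1) ^ n
  have htop : derivative^[n] (derivative^[n] u) = C ((2 * n).factorial : ℝ) := by
    rw [← Function.iterate_add_apply, ← two_mul, ← natDegree_sq_sub_one_pow n,
      iterate_derivative_natDegree, (monic_sq_sub_one.pow n).leadingCoeff, nsmul_one]
  have hibp := integral_eval_iterate_derivative_mul (a := -1) (b := 1) n u (derivative^[n] u)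
    (fun j hj => eval_iterate_derivative_sq_sub_one_pow_eq_zero hj (by norm_num))
    (fun j hj => eval_iterate_derivative_sq_sub_one_pow_eq_zero hj (by norm_num))
  calc ∫ y in (-1 : ℝ)..1, (legendrePoly n).eval y ^ 2
      = (1 / (2 ^ n * n.factorial)) ^ 2 *
          ∫ y in (-1 : ℝ)..1, (derivative^[n] u).eval y * (derivative^[n] u).eval y := by
        rw [← intervalIntegral.integral_const_mul]
        congr with y
        simp only [legendrePoly, eval_mul, eval_C, u]
        ring
    _ = (1 / (2 ^ n * n.factorial)) ^ 2 *
          ((2 * n).factorial * ∫ y in (-1 : ℝ)..1, (1 - y ^ 2) ^ n) := by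
        rw [hibp, htop]
        congr 1
        rw [← intervalIntegral.integral_const_mul, ← intervalIntegral.integral_const_mul]
        congr 1
        ext y
        simp only [eval_C, eval_pow, eval_sub, eval_X, eval_one, u]
        rw [show (1 - y ^ 2) ^ n = (-1) ^ n * (y ^ 2 - 1) ^ n by rw [← mul_pow]; ring]
        ring
    _ = 2 / (2 * n + 1) := by
        rw [integral_one_sub_sq_pow, Nat.factorial_succ]
        push_cast
        field_simp
        ring

theorem integral_legendrePoly_succ_sub_pred_sq {n : ℕ} (hn : 1 ≤ n) :
    ∫ y in (-1 : ℝ)..1, (legendrePoly (n + 1) - legendrePoly (n - 1)).eval y ^ 2 =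
      2 / (2 * n + 3) + 2 / (2 * n - 1) := by
  obtain ⟨m, rfl⟩ := Nat.exists_eq_add_of_le' hn
  have hcross := integral_legendrePoly_mul_eq_zero (n := m + 2) (q := legendrePoly m)
    ((natDegree_legendrePoly_le m).trans_lt (by omega))
  simp only [Nat.add_sub_cancel, eval_sub, sub_sq, mul_assoc]
  rw [intervalIntegral.integral_add (Continuous.intervalIntegrable (by fun_prop) _ _)
      (Continuous.intervalIntegrable (by fun_prop) _ _),
    intervalIntegral.integral_sub (Continuous.intervalIntegrable (by fun_prop) _ _)
      (Continuous.intervalIntegrable (by fun_prop) _ _),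
    intervalIntegral.integral_const_mul, hcross, integral_legendrePoly_sq,
    integral_legendrePoly_sq]
  push_cast
  ring

theorem sq_integral_abs_le {f : ℝ → ℝ} {a b : ℝ} (hab : a ≤ b) (hf : Continuous f) :
    (∫ y in a..b, |f y|) ^ 2 ≤ (b - a) * ∫ y in a..b, f y ^ 2 := by
  set A := ∫ y in a..b, |f y|
  -- the quadratic `t ↦ ∫ (|f| - t)²` is nonnegative, so its discriminant is `≤ 0`
  have hquad : ∀ t : ℝ, 0 ≤ (b - a) * (t * t) + (-2 * A) * t + ∫ y in a..b, f y ^ 2 := by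
    intro t
    have hexpand : ∀ y, (|f y| - t) ^ 2 = f y ^ 2 - 2 * t * |f y| + t ^ 2 := by
      intro y
      rw [sub_sq, sq_abs]
      ring
    have hnonneg := intervalIntegral.integral_nonneg (μ := volume) hab
      (fun y _ => sq_nonneg (|f y| - t))
    simp only [hexpand] at hnonneg
    rw [intervalIntegral.integral_add (Continuous.intervalIntegrable (by fun_prop) _ _)
        intervalIntegrable_const,
      intervalIntegral.integral_sub (Continuous.intervalIntegrable (by fun_prop) _ _)
        (Continuous.intervalIntegrable (by fun_prop) _ _),
      intervalIntegral.integral_const_mul, intervalIntegral.integral_const, smul_eq_mul]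
      at hnonneg
    linarith
  have hdiscrim := discrim_le_zero hquad
  rw [discrim] at hdiscrim
  linarith

theorem integral_abs_eval_legendrePoly_succ_sub_pred_le {n : ℕ} (hn : 1 ≤ n) :
    ∫ y in (-1 : ℝ)..1, |(legendrePoly (n + 1) - legendrePoly (n - 1)).eval y| ≤
      2 * √(1 / (2 * n + 3) + 1 / (2 * n - 1)) := by
  have hcs := sq_integral_abs_le (a := -1) (b := 1) (by norm_num)
    (legendrePoly (n + 1) - legendrePoly (n - 1)).continuous
  rw [integral_legendrePoly_succ_sub_pred_sq hn] at hcs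
  rw [← Real.sqrt_sq (intervalIntegral.integral_nonneg (by norm_num) fun y _ => abs_nonneg _),
    ← Real.sqrt_sq (zero_le_two (α := ℝ)), ← Real.sqrt_mul (sq_nonneg _)]
  exact Real.sqrt_le_sqrt (hcs.trans_eq (by ring))

theorem abs_integral_mul_le_of_abs_le {φ h : ℝ → ℝ} {a b L : ℝ} (hab : a ≤ b)
    (hφ : ∀ y ∈ Icc a b, |φ y| ≤ L) (hh : IntervalIntegrable h volume a b) :
    |∫ y in a..b, φ y * h y| ≤ L * ∫ y in a..b, |h y| := by
  rw [← intervalIntegral.integral_const_mul, ← Real.norm_eq_abs]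
  refine intervalIntegral.norm_integral_le_of_norm_le hab
    (Filter.Eventually.of_forall fun y hy => ?_) (hh.abs.const_mul L)
  rw [Real.norm_eq_abs, abs_mul]
  exact mul_le_mul_of_nonneg_right (hφ y (Ioc_subset_Icc_self hy)) (abs_nonneg _)

theorem abs_sum_integral_mul_le {K : ℕ} {b : ℕ → ℝ} {L : ℝ} {φ : ℕ → ℝ → ℝ} {h : ℝ → ℝ}
    (hb : ∀ i ≤ K, b i ≤ b (i + 1)) (hφ : ∀ i ≤ K, ∀ y ∈ Icc (b i) (b (i + 1)), |φ i y| ≤ L)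
    (hh : Continuous h) :
    |∑ i ∈ Finset.range (K + 1), ∫ y in (b i)..(b (i + 1)), φ i y * h y| ≤
      L * ∫ y in (b 0)..(b (K + 1)), |h y| :=
  calc _ ≤ ∑ i ∈ Finset.range (K + 1), L * ∫ y in (b i)..(b (i + 1)), |h y| := by
        refine (Finset.abs_sum_le_sum_abs _ _).trans (Finset.sum_le_sum fun i hi => ?_)
        have hiK : i ≤ K := Nat.lt_succ_iff.mp (Finset.mem_range.mp hi)
        exact abs_integral_mul_le_of_abs_le (hb i hiK) (hφ i hiK) (hh.intervalIntegrable _ _)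
    _ = L * ∫ y in (b 0)..(b (K + 1)), |h y| := by
        rw [← Finset.mul_sum, intervalIntegral.sum_integral_adjacent_intervals
          fun k _ => hh.abs.intervalIntegrable _ _]

theorem abs_Aterm_le_general
    (K : ℕ) (b : ℕ → ℝ) (L : ℝ) (G : ℕ → ℝ → ℝ)
    (hb0 : b 0 = -1) (hbK : b (K + 1) = 1)
    (hbmono : ∀ i ≤ K, b i < b (i + 1))
    (hL : 0 ≤ L)
    (hGder : ∀ i ≤ K, ∀ y ∈ Set.Icc (b i) (b (i + 1)),
      |derivWithin (G i) (Set.Icc (b i) (b (i + 1))) y| ≤ L)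
    (n : ℕ) (hn : 1 ≤ n) :
    |Aterm K b G n| ≤
      L * ((K : ℝ) + 1) / Real.sqrt (2 * (n : ℝ) + 1) *
        Real.sqrt (1 / (2 * (n : ℝ) + 3) + 1 / (2 * (n : ℝ) - 1)) := by
  set h := legendrePoly (n + 1) - legendrePoly (n - 1)
  set s : ℝ := 1 / (2 * n + 3) + 1 / (2 * n - 1)
  have hsum := abs_sum_integral_mul_le (fun i hi => (hbmono i hi).le) hGder h.continuous
  rw [hb0, hbK] at hsum
  have hroot : 0 < √(2 * (n : ℝ) + 1) := Real.sqrt_pos.mpr (by positivity)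
  rw [Aterm, abs_mul, abs_neg, abs_of_nonneg (by positivity)]
  simp only [legendreP_eq_eval_s4, ← eval_sub]
  calc _ ≤ 1 / (2 * √(2 * (n : ℝ) + 1)) * (L * (2 * √s)) := by
        gcongr
        exact hsum.trans (mul_le_mul_of_nonneg_left
          (integral_abs_eval_legendrePoly_succ_sub_pred_le hn) hL)
    _ = L / √(2 * (n : ℝ) + 1) * √s := by field_simp
    _ ≤ _ := by gcongr; exact le_mul_of_one_le_right hL (by linarith)

/-- bound on the integral term A_n. -/
theorem abs_Aterm_le
    (K : ℕ) (b : ℕ → ℝ) (L : ℝ) (G : ℕ → ℝ → ℝ) (g : ℝ → ℝ)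
    (hb0 : b 0 = -1) (hbK : b (K + 1) = 1)
    (hbmono : ∀ i ≤ K, b i < b (i + 1))
    (hL : 0 ≤ L)
    (hG : ∀ i ≤ K, ContDiffOn ℝ 1 (G i) (Set.Icc (b i) (b (i + 1))))
    (hGder : ∀ i ≤ K, ∀ y ∈ Set.Icc (b i) (b (i + 1)),
      |derivWithin (G i) (Set.Icc (b i) (b (i + 1))) y| ≤ L)
    (hg1 : ∀ i < K, ∀ y, b i ≤ y → y < b (i + 1) → g y = G i y)
    (hg2 : ∀ y ∈ Set.Icc (b K) (b (K + 1)), g y = G K y)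
    (n : ℕ) (hn : 1 ≤ n) :
    |Aterm K b G n| ≤
      L * ((K : ℝ) + 1) / Real.sqrt (2 * (n : ℝ) + 1) *
        Real.sqrt (1 / (2 * (n : ℝ) + 3) + 1 / (2 * (n : ℝ) - 1)) :=
  abs_Aterm_le_general K b L G hb0 hbK hbmono hL hGder n hn
end
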